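/- arXiv:1507.01897 — 2 statements merged into one kernel-verified Lean document; each statement's English description precedes it below -/
import Mathlib

section
/- For any x, ω ∈ ℝ³, the operator norm of K(x,ω) equals |x × ω| · |x|. -/
open Matrix

noncomputable def K (x ω : Fin 3 → ℝ) : Matrix (Fin 3) (Fin 3) ℝ :=
  vecMulVec (crossProduct ω x) x + vecMulVec x (crossProduct ω x)

noncomputable def norm3 (v : Fin 3 → ℝ) : ℝ := Real.sqrt (v ⬝ᵥ v)

/-!
`K x ω` is the symmetrised outer product `a ⊗ b + b ⊗ a` of the orthogonal vectors
`a = ω × x` and `b = x`. For orthogonal `a, b` the map `v ↦ ⟪b, v⟫ a + ⟪a, v⟫ b` is bounded by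
`‖a‖ ‖b‖` (Pythagoras and Bessel's inequality for the pair `a, b`), and the bound is attained at
`‖b‖ a + ‖a‖ b`, an eigenvector with eigenvalue `‖a‖ ‖b‖`. Finally `‖ω × x‖ = ‖x × ω‖`.
-/

open InnerProductSpace WithLp

theorem norm_le_opNorm_of_apply_eq_smul {𝕜 E : Type*} [NontriviallyNormedField 𝕜]
    [NormedAddCommGroup E] [NormedSpace 𝕜 E] {f : E →L[𝕜] E} {c : 𝕜} {v : E} (hv : v ≠ 0)
    (hfv : f v = c • v) : ‖c‖ ≤ ‖f‖ := by
  have h := f.le_opNorm v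
  rw [hfv, norm_smul] at h
  exact le_of_mul_le_mul_right h (norm_pos_iff.mpr hv)

section Orthogonal

variable {E : Type*} [NormedAddCommGroup E] [InnerProductSpace ℝ E] {a b : E}

theorem inner_sq_add_inner_sq_le_of_inner_eq_zero (hab : ⟪a, b⟫_ℝ = 0) (v : E) :
    ‖a‖ ^ 2 * ⟪b, v⟫_ℝ ^ 2 + ‖b‖ ^ 2 * ⟪a, v⟫_ℝ ^ 2 ≤ ‖a‖ ^ 2 * ‖b‖ ^ 2 * ‖v‖ ^ 2 := by
  rcases eq_or_ne a 0 with rfl | ha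
  · simp
  rcases eq_or_ne b 0 with rfl | hb
  · simp
  -- the squared norm of the residual of `v` after projecting onto `a` and `b`, scaled by
  -- `(‖a‖ ‖b‖)²` to clear denominators, equals `(‖a‖ ‖b‖)²` times the difference of the two sides
  have hres := real_inner_self_nonneg (x := (‖a‖ ^ 2 * ‖b‖ ^ 2) • v
    - (‖b‖ ^ 2 * ⟪a, v⟫_ℝ) • a - (‖a‖ ^ 2 * ⟪b, v⟫_ℝ) • b)
  simp only [inner_sub_left, inner_sub_right, real_inner_smul_left, real_inner_smul_right,
    real_inner_self_eq_norm_sq, real_inner_comm a b, real_inner_comm a v, real_inner_comm b v,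
    hab, norm_smul, Real.norm_eq_abs, mul_pow, sq_abs] at hres
  have hab_pos : 0 < ‖a‖ ^ 2 * ‖b‖ ^ 2 := by positivity
  nlinarith

theorem norm_inner_smul_add_inner_smul_le (hab : ⟪a, b⟫_ℝ = 0) (v : E) :
    ‖⟪b, v⟫_ℝ • a + ⟪a, v⟫_ℝ • b‖ ≤ ‖a‖ * ‖b‖ * ‖v‖ := by
  have horth : ⟪⟪b, v⟫_ℝ • a, ⟪a, v⟫_ℝ • b⟫_ℝ = 0 := by
    simp [real_inner_smul_left, real_inner_smul_right, hab]
  rw [mul_self_le_mul_self_iff (norm_nonneg _) (by positivity),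
    norm_add_sq_eq_norm_sq_add_norm_sq_real horth, norm_smul, norm_smul, Real.norm_eq_abs,
    Real.norm_eq_abs]
  nlinarith [inner_sq_add_inner_sq_le_of_inner_eq_zero hab v, abs_mul_abs_self ⟪a, v⟫_ℝ,
    abs_mul_abs_self ⟪b, v⟫_ℝ]

theorem rankOne_add_rankOne_apply_norm_smul_add_norm_smul (hab : ⟪a, b⟫_ℝ = 0) :
    (rankOne ℝ a b + rankOne ℝ b a) (‖b‖ • a + ‖a‖ • b) = (‖a‖ * ‖b‖) • (‖b‖ • a + ‖a‖ • b) := by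
  simp only [FunLike.coe_add, Pi.add_apply, rankOne_apply, inner_add_right, real_inner_smul_right,
    real_inner_self_eq_norm_sq, hab, real_inner_comm a b]
  module

theorem norm_rankOne_add_rankOne_of_inner_eq_zero (hab : ⟪a, b⟫_ℝ = 0) :
    ‖rankOne ℝ a b + rankOne ℝ b a‖ = ‖a‖ * ‖b‖ := by
  refine le_antisymm (ContinuousLinearMap.opNorm_le_bound _ (by positivity) fun v => ?_) ?_
  · simpa using norm_inner_smul_add_inner_smul_le hab v
  rcases eq_or_ne a 0 with rfl | ha
  · simp
  rcases eq_or_ne b 0 with rfl | hb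
  · simp
  have hv : ‖b‖ • a + ‖a‖ • b ≠ 0 := fun h => by
    have := congrArg (⟪a, ·⟫_ℝ) h
    simp only [inner_add_right, real_inner_smul_right, real_inner_self_eq_norm_sq, hab,
      inner_zero_right] at this
    have : 0 < ‖b‖ * ‖a‖ ^ 2 := by positivity
    linarith
  simpa [abs_of_nonneg, mul_nonneg] using
    norm_le_opNorm_of_apply_eq_smul hv (rankOne_add_rankOne_apply_norm_smul_add_norm_smul hab)

end Orthogonal

theorem toEuclideanLin_vecMulVec {m n : Type*} [Fintype m] [Fintype n] [DecidableEq n]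
    (u : m → ℝ) (w : n → ℝ) :
    (toEuclideanLin (vecMulVec u w)).toContinuousLinearMap = rankOne ℝ (toLp 2 u) (toLp 2 w) := by
  have h := (LinearEquiv.symm_apply_eq _).mp (symm_toEuclideanLin_rankOne (toLp 2 u) (toLp 2 w))
  simp only [star_trivial] at h
  ext1 v
  rw [LinearMap.coe_toContinuousLinearMap', ← h]
  rfl

theorem norm3_eq_norm_toLp (v : Fin 3 → ℝ) : norm3 v = ‖toLp 2 v‖ := by
  rw [norm3, ← star_trivial v, ← EuclideanSpace.inner_toLp_toLp, star_trivial,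
    real_inner_self_eq_norm_sq, Real.sqrt_sq (norm_nonneg _)]

theorem K_opNorm (x ω : Fin 3 → ℝ) :
    ‖(Matrix.toEuclideanLin (K x ω)).toContinuousLinearMap‖ =
      norm3 (crossProduct x ω) * norm3 x := by
  have horth : ⟪toLp 2 (crossProduct ω x), toLp 2 x⟫_ℝ = 0 := by
    rw [EuclideanSpace.inner_toLp_toLp, star_trivial, dot_cross_self]
  rw [K, map_add, map_add, toEuclideanLin_vecMulVec, toEuclideanLin_vecMulVec,
    norm_rankOne_add_rankOne_of_inner_eq_zero horth, ← cross_anticomm, norm3_eq_norm_toLp,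
    norm3_eq_norm_toLp, toLp_neg, norm_neg]
end

section
/- Let t* = 8π√(2/7). The functions x_a(t) = R_{k,φ(t)}(−1/2, 0, z(t)), x_b(t) = R_{k,φ(t)}(1/2, 0, z(t)), ω_a(t) = ω(t) R_{k,φ(t)} ω_a(0), ω_b(t) = ω(t) R_{k,φ(t)} ω_b(0), with z(t) = √(2/3) log(1 − (1/(8π))√(7/2) t), φ(t) = 2√(2/7) log(1 − (1/(8π))√(7/2) t), ω(t) = 1/((1/(8π))√(7/2) t − 1), ω_a(0) = (−√(1/6), −√(7/12), 1/2), ω_b(0) = (√(1/6), √(7/12), 1/2), solve on [0, t*) the system ω_a′ = −(3/(8π)) [K(x_a−x_b, ω_b)/|x_a−x_b|⁵] ω_a, ω_b′ = −(3/(8π)) [K(x_b−x_a, ω_a)/|x_b−x_a|⁵] ω_b, x_a′ = (1/(4π)) ω_b × (x_a−x_b)/|x_a−x_b|³, x_b′ = (1/(4π)) ω_a × (x_b−x_a)/|x_b−x_a|³. -/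
open Matrix Real

noncomputable def Rz (φ : ℝ) : Matrix (Fin 3) (Fin 3) ℝ :=
  !![Real.cos φ, -Real.sin φ, 0; Real.sin φ, Real.cos φ, 0; 0, 0, 1]

noncomputable def zf (t : ℝ) : ℝ := Real.sqrt (2/3) * Real.log (1 - (1/(8*π)) * Real.sqrt (7/2) * t)
noncomputable def φf (t : ℝ) : ℝ := 2 * Real.sqrt (2/7) * Real.log (1 - (1/(8*π)) * Real.sqrt (7/2) * t)
noncomputable def ωf (t : ℝ) : ℝ := 1 / ((1/(8*π)) * Real.sqrt (7/2) * t - 1)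

noncomputable def ωa0 : Fin 3 → ℝ := ![-Real.sqrt (1/6), -Real.sqrt (7/12), 1/2]
noncomputable def ωb0 : Fin 3 → ℝ := ![Real.sqrt (1/6), Real.sqrt (7/12), 1/2]

noncomputable def xa (t : ℝ) : Fin 3 → ℝ := Rz (φf t) *ᵥ ![(-1/2 : ℝ), 0, zf t]
noncomputable def xb (t : ℝ) : Fin 3 → ℝ := Rz (φf t) *ᵥ ![(1/2 : ℝ), 0, zf t]
noncomputable def ωa (t : ℝ) : Fin 3 → ℝ := ωf t • (Rz (φf t) *ᵥ ωa0)
noncomputable def ωb (t : ℝ) : Fin 3 → ℝ := ωf t • (Rz (φf t) *ᵥ ωb0)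

/-!
The solution is a rigid motion: in the frame rotated by `Rz (φf t)` the vortices sit at
`(∓1/2, 0, zf t)` with vorticities `ωf t • ωa0` and `ωf t • ωb0`. The cross and dot products,
hence `K`, commute with `Rz φ`, and `d/dt (Rz (φ t) v t) = Rz (φ t) (φ' e₃ × v t + v' t)`, so each
equation reduces to an algebraic identity in the rotating frame, where `|xa - xb| = 1`.
The half-turn `Rz π` exchanges the two vortices, so the equations for `b` are the images under
`Rz π` of those for `a`.
-/

section Rotation

variable (φ : ℝ)

theorem Rz_mul_Rz (α β : ℝ) : Rz α * Rz β = Rz (α + β) := by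
  ext i j
  fin_cases i <;> fin_cases j <;>
    simp [Rz, Matrix.mul_apply, Fin.sum_univ_three, cos_add, sin_add] <;> ring

theorem Rz_mulVec_Rz_mulVec_comm (α β : ℝ) (v : Fin 3 → ℝ) :
    Rz α *ᵥ (Rz β *ᵥ v) = Rz β *ᵥ (Rz α *ᵥ v) := by
  rw [mulVec_mulVec, mulVec_mulVec, Rz_mul_Rz, Rz_mul_Rz, add_comm]

theorem Rz_mulVec_apply (v : Fin 3 → ℝ) :
    Rz φ *ᵥ v = ![cos φ * v 0 - sin φ * v 1, sin φ * v 0 + cos φ * v 1, v 2] := by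
  ext i
  fin_cases i <;> simp [Rz, mulVec, dotProduct, Fin.sum_univ_three]; ring

theorem Rz_pi_mulVec (v : Fin 3 → ℝ) : Rz π *ᵥ v = ![-v 0, -v 1, v 2] := by
  simp [Rz_mulVec_apply]

theorem dotProduct_Rz_mulVec (a b : Fin 3 → ℝ) : Rz φ *ᵥ a ⬝ᵥ Rz φ *ᵥ b = a ⬝ᵥ b := by
  simp only [dotProduct, Rz_mulVec_apply, Fin.sum_univ_three, Fin.isValue, cons_val_zero,
    cons_val_one, cons_val, add_left_inj]
  linear_combination (a 0 * b 0 + a 1 * b 1) * sin_sq_add_cos_sq φ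

theorem norm3_Rz_mulVec (v : Fin 3 → ℝ) : norm3 (Rz φ *ᵥ v) = norm3 v := by
  rw [norm3, norm3, dotProduct_Rz_mulVec]

theorem cross_Rz_mulVec (a b : Fin 3 → ℝ) :
    (Rz φ *ᵥ a) ⨯₃ (Rz φ *ᵥ b) = Rz φ *ᵥ (a ⨯₃ b) := by
  ext i
  fin_cases i <;>
    simp only [Rz_mulVec_apply, cross_apply, Fin.isValue, Fin.reduceFinMk, Fin.zero_eta, Fin.mk_one,
      cons_val_zero, cons_val_one, cons_val]
  · ring
  · ring
  · linear_combination (a 0 * b 1 - a 1 * b 0) * sin_sq_add_cos_sq φ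

theorem K_mulVec (x ω v : Fin 3 → ℝ) : K x ω *ᵥ v = (x ⬝ᵥ v) • (ω ⨯₃ x) + (ω ⨯₃ x ⬝ᵥ v) • x := by
  simp [K, add_mulVec, vecMulVec_mulVec]

theorem K_Rz_mulVec (x ω v : Fin 3 → ℝ) :
    K (Rz φ *ᵥ x) (Rz φ *ᵥ ω) *ᵥ (Rz φ *ᵥ v) = Rz φ *ᵥ (K x ω *ᵥ v) := by
  simp only [K_mulVec, cross_Rz_mulVec, dotProduct_Rz_mulVec, mulVec_add, mulVec_smul]

theorem hasDerivAt_vec3 {f g h : ℝ → ℝ} {f' g' h' t : ℝ} (hf : HasDerivAt f f' t)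
    (hg : HasDerivAt g g' t) (hh : HasDerivAt h h' t) :
    HasDerivAt (fun s => ![f s, g s, h s]) ![f', g', h'] t :=
  hasDerivAt_pi.2 fun i => by fin_cases i <;> simpa

theorem hasDerivAt_Rz_mulVec {θ' t : ℝ} {θ : ℝ → ℝ} {v : ℝ → Fin 3 → ℝ} {v' : Fin 3 → ℝ}
    (hθ : HasDerivAt θ θ' t) (hv : HasDerivAt v v' t) :
    HasDerivAt (fun s => Rz (θ s) *ᵥ v s) (Rz (θ t) *ᵥ (θ' • (![0, 0, 1] ⨯₃ v t) + v')) t := by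
  have hv0 := hasDerivAt_pi.1 hv 0
  have hv1 := hasDerivAt_pi.1 hv 1
  have hv2 := hasDerivAt_pi.1 hv 2
  simp only [Rz_mulVec_apply]
  convert hasDerivAt_vec3 ((hθ.cos.mul hv0).sub (hθ.sin.mul hv1))
    ((hθ.sin.mul hv0).add (hθ.cos.mul hv1)) hv2 using 1
  · rfl
  · funext i
    fin_cases i <;> simp [cross_apply] <;> ring

end Rotation

theorem sqrt_two_sevenths_mul_sqrt_seven_halves : √(2/7) * √(7/2) = 1 := by
  rw [← sqrt_mul (by norm_num)]; norm_num

theorem sqrt_two_thirds_mul_sqrt_seven_halves : √(2/3) * √(7/2) = 2 * √(7/12) := by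
  rw [← sqrt_mul (by norm_num), show (2 : ℝ) / 3 * (7 / 2) = 2 ^ 2 * (7 / 12) by norm_num,
    sqrt_mul (by norm_num), sqrt_sq (by norm_num)]

theorem sqrt_seven_twelfths : √(7/12) = √(7/2) * √(1/6) := by
  rw [← sqrt_mul (by norm_num)]; norm_num

theorem one_sub_pos_of_lt_blowup_time {t : ℝ} (ht : t < 8 * π * √(2/7)) :
    0 < 1 - 1/(8*π) * √(7/2) * t := by
  have hc : 0 < 1/(8*π) * √(7/2) := by positivity
  have h := mul_lt_mul_of_pos_left ht hc
  have hπ := pi_pos.ne'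
  rw [show 1/(8*π) * √(7/2) * (8 * π * √(2/7)) = √(2/7) * √(7/2) by field_simp,
    sqrt_two_sevenths_mul_sqrt_seven_halves] at h
  linarith

theorem ωf_eq (t : ℝ) : ωf t = -(1 - 1/(8*π) * √(7/2) * t)⁻¹ := by
  rw [ωf, one_div, ← inv_neg, neg_sub]

section Profiles

variable {t : ℝ} (hu : 1 - 1/(8*π) * √(7/2) * t ≠ 0)
include hu

theorem hasDerivAt_ωf : HasDerivAt ωf (-(1/(8*π) * √(7/2)) * ωf t ^ 2) t := by
  have hlin : HasDerivAt (fun s => 1/(8*π) * √(7/2) * s - 1) (1/(8*π) * √(7/2)) t := by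
    simpa using ((hasDerivAt_id t).const_mul (1/(8*π) * √(7/2))).sub_const 1
  have hne : 1/(8*π) * √(7/2) * t - 1 ≠ 0 := fun h => hu (by linarith)
  exact ((hasDerivAt_const t (1 : ℝ)).div hlin hne).congr_deriv
    (by rw [ωf, div_pow, one_pow]; ring)

theorem hasDerivAt_log_one_sub : HasDerivAt (fun s => log (1 - 1/(8*π) * √(7/2) * s))
    (1/(8*π) * √(7/2) * ωf t) t := by
  have hlin : HasDerivAt (fun s => 1 - 1/(8*π) * √(7/2) * s) (-(1/(8*π) * √(7/2))) t := by
    simpa using ((hasDerivAt_id t).const_mul (1/(8*π) * √(7/2))).const_sub 1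
  exact (hlin.log hu).congr_deriv (by rw [ωf_eq]; ring)

theorem hasDerivAt_φf : HasDerivAt φf (ωf t / (4*π)) t :=
  ((hasDerivAt_log_one_sub hu).const_mul (2 * √(2/7))).congr_deriv
    (by linear_combination (ωf t / (4*π)) * sqrt_two_sevenths_mul_sqrt_seven_halves)

theorem hasDerivAt_zf : HasDerivAt zf (√(7/12) * ωf t / (4*π)) t :=
  ((hasDerivAt_log_one_sub hu).const_mul (√(2/3))).congr_deriv
    (by linear_combination (ωf t / (8*π)) * sqrt_two_thirds_mul_sqrt_seven_halves)

end Profiles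

theorem xa_sub_xb (t : ℝ) : xa t - xb t = Rz (φf t) *ᵥ ![-1, 0, 0] := by
  rw [xa, xb, ← mulVec_sub]
  congr 1
  funext i; fin_cases i <;> norm_num

theorem norm3_xa_sub_xb (t : ℝ) : norm3 (xa t - xb t) = 1 := by
  rw [xa_sub_xb, norm3_Rz_mulVec, norm3]
  simp [dotProduct, Fin.sum_univ_three]

theorem ωa_eq (t : ℝ) : ωa t = Rz (φf t) *ᵥ (ωf t • ωa0) := (mulVec_smul _ _ _).symm

theorem ωb_eq (t : ℝ) : ωb t = Rz (φf t) *ᵥ (ωf t • ωb0) := (mulVec_smul _ _ _).symm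

theorem Rz_pi_mulVec_xa (t : ℝ) : Rz π *ᵥ xa t = xb t := by
  rw [xa, xb, Rz_mulVec_Rz_mulVec_comm, Rz_pi_mulVec]
  simp [neg_div]

theorem Rz_pi_mulVec_xb (t : ℝ) : Rz π *ᵥ xb t = xa t := by
  rw [xa, xb, Rz_mulVec_Rz_mulVec_comm, Rz_pi_mulVec]
  simp [neg_div]

theorem Rz_pi_mulVec_ωa (t : ℝ) : Rz π *ᵥ ωa t = ωb t := by
  rw [ωa, ωb, mulVec_smul, Rz_mulVec_Rz_mulVec_comm, Rz_pi_mulVec, ωa0, ωb0]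
  simp

theorem Rz_pi_mulVec_ωb (t : ℝ) : Rz π *ᵥ ωb t = ωa t := by
  rw [ωa, ωb, mulVec_smul, Rz_mulVec_Rz_mulVec_comm, Rz_pi_mulVec, ωa0, ωb0]
  simp

section Equations

variable {t : ℝ} (hu : 1 - 1/(8*π) * √(7/2) * t ≠ 0)
include hu

theorem hasDerivAt_xa : HasDerivAt xa
    ((1 / (4 * π) * (1 / norm3 (xa t - xb t) ^ 3)) • (ωb t ⨯₃ (xa t - xb t))) t := by
  have hbody : HasDerivAt (fun s => ![(-1/2 : ℝ), 0, zf s]) ![0, 0, √(7/12) * ωf t / (4*π)] t :=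
    hasDerivAt_vec3 (hasDerivAt_const _ _) (hasDerivAt_const _ _) (hasDerivAt_zf hu)
  refine (hasDerivAt_Rz_mulVec (hasDerivAt_φf hu) hbody).congr_deriv ?_
  rw [norm3_xa_sub_xb, xa_sub_xb, ωb_eq, cross_Rz_mulVec, ← mulVec_smul]
  congr 1
  funext i; fin_cases i <;> simp [ωb0, cross_apply] <;> ring

theorem hasDerivAt_ωa : HasDerivAt ωa
    ((-(3 / (8 * π)) * (1 / norm3 (xa t - xb t) ^ 5)) • (K (xa t - xb t) (ωb t) *ᵥ ωa t)) t := by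
  refine ((hasDerivAt_Rz_mulVec (hasDerivAt_φf hu)
    ((hasDerivAt_ωf hu).smul_const ωa0)).congr_of_eventuallyEq (.of_forall ωa_eq)).congr_deriv ?_
  rw [norm3_xa_sub_xb, xa_sub_xb, ωa_eq, ωb_eq, K_Rz_mulVec, ← mulVec_smul]
  congr 1
  have hq : √(7/2) ^ 2 = 7/2 := sq_sqrt (by norm_num)
  have hs : √(1/6) ^ 2 = 1/6 := sq_sqrt (by norm_num)
  rw [ωa0, ωb0, sqrt_seven_twelfths]
  generalize √(7/2) = q at hq ⊢
  generalize √(1/6) = s at hs ⊢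
  funext i; fin_cases i <;> simp [K_mulVec, cross_apply, dotProduct, Fin.sum_univ_three]
  · ring
  · linear_combination (ωf t ^ 2 * s / (8 * π)) * hq
  · linear_combination (-3 * ωf t ^ 2 * q / (8 * π)) * hs

theorem hasDerivAt_xb : HasDerivAt xb
    ((1 / (4 * π) * (1 / norm3 (xb t - xa t) ^ 3)) • (ωa t ⨯₃ (xb t - xa t))) t := by
  refine ((hasDerivAt_Rz_mulVec (hasDerivAt_const t π) (hasDerivAt_xa hu)).congr_of_eventuallyEq
    (.of_forall fun s => (Rz_pi_mulVec_xa s).symm)).congr_deriv ?_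
  rw [zero_smul, zero_add, mulVec_smul, ← cross_Rz_mulVec, ← norm3_Rz_mulVec π (xa t - xb t),
    mulVec_sub, Rz_pi_mulVec_xa, Rz_pi_mulVec_xb, Rz_pi_mulVec_ωb]

theorem hasDerivAt_ωb : HasDerivAt ωb
    ((-(3 / (8 * π)) * (1 / norm3 (xb t - xa t) ^ 5)) • (K (xb t - xa t) (ωa t) *ᵥ ωb t)) t := by
  refine ((hasDerivAt_Rz_mulVec (hasDerivAt_const t π) (hasDerivAt_ωa hu)).congr_of_eventuallyEq
    (.of_forall fun s => (Rz_pi_mulVec_ωa s).symm)).congr_deriv ?_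
  rw [zero_smul, zero_add, mulVec_smul, ← K_Rz_mulVec, ← norm3_Rz_mulVec π (xa t - xb t),
    mulVec_sub, Rz_pi_mulVec_xa, Rz_pi_mulVec_xb, Rz_pi_mulVec_ωa, Rz_pi_mulVec_ωb]

end Equations

/-- The exact rotationally symmetric solution satisfies the point-vortex system on `[0, t*)`,
`t* = 8π√(2/7)`. -/
theorem exact_solution :
    ∀ t ∈ Set.Ico (0 : ℝ) (8 * π * Real.sqrt (2/7)),
      HasDerivAt ωa
        ((-(3 / (8 * π)) * (1 / norm3 (xa t - xb t) ^ 5)) • (K (xa t - xb t) (ωb t) *ᵥ ωa t)) t ∧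
      HasDerivAt ωb
        ((-(3 / (8 * π)) * (1 / norm3 (xb t - xa t) ^ 5)) • (K (xb t - xa t) (ωa t) *ᵥ ωb t)) t ∧
      HasDerivAt xa
        ((1 / (4 * π) * (1 / norm3 (xa t - xb t) ^ 3)) • crossProduct (ωb t) (xa t - xb t)) t ∧
      HasDerivAt xb
        ((1 / (4 * π) * (1 / norm3 (xb t - xa t) ^ 3)) • crossProduct (ωa t) (xb t - xa t)) t := by
  rintro t ⟨-, ht⟩
  have hu := (one_sub_pos_of_lt_blowup_time ht).ne'
  exact ⟨hasDerivAt_ωa hu, hasDerivAt_ωb hu, hasDerivAt_xa hu, hasDerivAt_xb hu⟩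
end
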